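/- arXiv:0910.3009 — 3 statements merged into one kernel-verified Lean document; each statement's English description precedes it below -/
import Mathlib

section
/- For all x, y ∈ S² with x ≠ ±y, the operator T(x,y) = C(x,y) − O(x,y) : y^⊥ → x^⊥ is the restriction to y^⊥ of the unique rotation g ∈ SO(3) which maps y to x and fixes the common line x^⊥ ∩ y^⊥ pointwise (i.e. the rotation in the plane spanned by x and y, which is parallel translation along the unique geodesic of S² from y to x). In particular T(x,y) is an orthogonal isomorphism from y^⊥ onto x^⊥. -/
/-! For `v ⊥ y` both kernels are explicit: `C(x,y) v = v - k (x - c y)` and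
`O(x,y) v = k (y - c x)` with `c = ⟪x, y⟫` and `k = ⟪x, v⟫ / (1 - c²)`, so
`T(x,y) v = v - ⟪x, v⟫ / (1 + c) • (x + y)`, the reflection of `v` in `(x + y)ᗮ`. Hence on `yᗮ`
the kernel agrees with `g = ρ_{(x+y)ᗮ} ∘ ρ_{yᗮ}`, a product of two reflections, which has
determinant one, sends `y ↦ -y ↦ x` and fixes `{x, y}ᗮ`. If `g'` is another such rotation,
`g'⁻¹ g` fixes `y` and `{x, y}ᗮ`, i.e. the hyperplane `(x - c y)ᗮ`; an isometry fixing a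
hyperplane pointwise is the identity or the reflection in it, and the determinant rules out the
reflection. -/

noncomputable section

open MeasureTheory Submodule
open scoped RealInnerProductSpace

abbrev V : Type := EuclideanSpace ℝ (Fin 3)

abbrev S2 : Type := Metric.sphere (0 : V) 1

/-- The plane `x^⊥` orthogonal to a point `x` of the unit sphere. -/
def plane (x : S2) : Submodule ℝ V := (ℝ ∙ (x : V))ᗮ

/-- The common line `x^⊥ ∩ y^⊥`. -/
def cline (x y : S2) : Submodule ℝ V := plane x ⊓ plane y

/-- The common-lines kernel `C(x,y) : V → V`: orthogonal projection onto the line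
`x^⊥ ∩ y^⊥`.  Its restriction to `y^⊥` is the kernel of the paper: it sends `v ∈ y^⊥` to
the orthogonal projection of `v` onto `x^⊥ ∩ y^⊥`, viewed inside `x^⊥`. -/
def Cker (x y : S2) : V →ₗ[ℝ] V :=
  (cline x y).subtype ∘ₗ (orthogonalProjection (cline x y)).toLinearMap

/-- The map on the sphere induced by a linear isometry of `V`. -/
def sphereMap (g : V ≃ₗᵢ[ℝ] V) (x : S2) : S2 :=
  ⟨g x, by
    have := mem_sphere_zero_iff_norm.mp x.2
    simp [mem_sphere_zero_iff_norm, this]⟩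

/-- The antipodal map on the sphere. -/
def negS (x : S2) : S2 :=
  ⟨-(x : V), by
    have := mem_sphere_zero_iff_norm.mp x.2
    simp [mem_sphere_zero_iff_norm, this]⟩

/-- The orthogonal projection `Pr_{x^⊥} : V → x^⊥`, viewed with values in `V`. -/
def projPerp (x : S2) (v : V) : V := (orthogonalProjection (plane x) v : V)

/-- The unit vector `o_{x,y} = Pr_{x^⊥}(y)/‖Pr_{x^⊥}(y)‖ ∈ x^⊥`. -/
def oVec (x y : S2) : V := ‖projPerp x (y : V)‖⁻¹ • projPerp x (y : V)

/-- The orthographic kernel `O(x,y) : V → V`, `v ↦ B(o_{y,x}, v)·o_{x,y}`.  Its restriction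
to `y^⊥` is the kernel of the paper, with values in `x^⊥`. -/
def Oker (x y : S2) : V →ₗ[ℝ] V where
  toFun v := ⟪oVec y x, v⟫ • oVec x y
  map_add' a b := by simp only [inner_add_right, add_smul]
  map_smul' c a := by simp only [inner_smul_right, RingHom.id_apply, smul_smul]

section

variable {E : Type*} [NormedAddCommGroup E] [InnerProductSpace ℝ E]

namespace LinearIsometryEquiv

theorem apply_eq_or_eq_neg_of_forall_mem_orthogonal_singleton (h : E ≃ₗᵢ[ℝ] E) (a : E)
    (hfix : ∀ v ∈ (ℝ ∙ a)ᗮ, h v = v) : h a = a ∨ h a = -a := by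
  have hmem : h a ∈ ℝ ∙ a := by
    rw [← (ℝ ∙ a).orthogonal_orthogonal]
    intro w hw
    rw [← hfix w hw, h.inner_map_map]
    exact inner_eq_zero_symm.mp (hw a (mem_span_singleton_self a))
  obtain ⟨t, ht⟩ := mem_span_singleton.mp hmem
  rcases eq_or_ne a 0 with rfl | ha
  · simp
  have habs : |t| = 1 := by
    have := congrArg norm ht
    rw [h.norm_map, norm_smul, Real.norm_eq_abs] at this
    exact (mul_eq_right₀ (norm_ne_zero_iff.mpr ha)).mp this
  rcases abs_eq (zero_le_one' ℝ) |>.mp habs with rfl | rfl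
  · exact .inl (by simpa using ht.symm)
  · exact .inr (by simpa using ht.symm)

theorem eq_refl_of_det_eq_one_of_forall_mem_orthogonal_singleton [FiniteDimensional ℝ E]
    (h : E ≃ₗᵢ[ℝ] E) (a : E) (hdet : LinearMap.det (h.toLinearEquiv : E →ₗ[ℝ] E) = 1)
    (hfix : ∀ v ∈ (ℝ ∙ a)ᗮ, h v = v) : h = LinearIsometryEquiv.refl ℝ E := by
  have hcompl := (ℝ ∙ a).isCompl_orthogonal.codisjoint
  rcases h.apply_eq_or_eq_neg_of_forall_mem_orthogonal_singleton a hfix with ha | ha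
  · refine LinearMap.ext_on_codisjoint hcompl ?_ hfix
    intro v hv
    obtain ⟨t, rfl⟩ := mem_span_singleton.mp hv
    simp [ha]
  · rcases eq_or_ne a 0 with rfl | ha0
    · exact ext fun v => hfix v (by simp)
    have hrefl : h = reflection (ℝ ∙ a)ᗮ := by
      refine LinearMap.ext_on_codisjoint hcompl ?_ ?_
      · intro v hv
        obtain ⟨t, rfl⟩ := mem_span_singleton.mp hv
        simp [ha, reflection_orthogonalComplement_singleton_eq_neg]
      · intro v hv
        rw [hfix v hv, reflection_mem_subspace_eq_self hv]
    rw [hrefl, det_reflection, orthogonal_orthogonal, finrank_span_singleton ha0] at hdet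
    norm_num at hdet

theorem apply_mem_orthogonal_singleton_iff (g : E ≃ₗᵢ[ℝ] E) {x y v : E}
    (h : g y = x) : g v ∈ (ℝ ∙ x)ᗮ ↔ v ∈ (ℝ ∙ y)ᗮ := by
  rw [mem_orthogonal_singleton_iff_inner_right, mem_orthogonal_singleton_iff_inner_right, ← h,
    g.inner_map_map]

end LinearIsometryEquiv

/-- For unit vectors `x ≠ -y`, the rotation in the plane of `x` and `y` taking `y` to `x`. -/
def planeRotation (x y : E) : E ≃ₗᵢ[ℝ] E :=
  (reflection (ℝ ∙ y)ᗮ).trans (reflection (ℝ ∙ (x + y))ᗮ)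

section planeRotation

variable {x y : E}

theorem planeRotation_apply_right (h : ‖x‖ = ‖y‖) : planeRotation x y y = x := by
  have hswap := reflection_sub (v := x) (w := -y) (by rw [norm_neg, h])
  rw [sub_neg_eq_add] at hswap
  rw [planeRotation, LinearIsometryEquiv.trans_apply,
    reflection_orthogonalComplement_singleton_eq_neg, ← hswap, reflection_reflection]

theorem planeRotation_apply_of_mem {u : E} (hu : u ∈ (ℝ ∙ x)ᗮ ⊓ (ℝ ∙ y)ᗮ) :
    planeRotation x y u = u := by
  rw [mem_inf, mem_orthogonal_singleton_iff_inner_right,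
    mem_orthogonal_singleton_iff_inner_right] at hu
  have hxy : u ∈ (ℝ ∙ (x + y))ᗮ := by
    rw [mem_orthogonal_singleton_iff_inner_right, inner_add_left, hu.1, hu.2, add_zero]
  rw [planeRotation, LinearIsometryEquiv.trans_apply, reflection_mem_subspace_eq_self
    (mem_orthogonal_singleton_iff_inner_right.mpr hu.2), reflection_mem_subspace_eq_self hxy]

theorem planeRotation_apply_of_inner_eq_zero (hx : ‖x‖ = 1) (hy : ‖y‖ = 1)
    (hxy : ⟪x, y⟫ ≠ -1) {v : E} (hv : ⟪y, v⟫ = 0) :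
    planeRotation x y v = v - (⟪x, v⟫ / (1 + ⟪x, y⟫)) • (x + y) := by
  have hnorm : ‖x + y‖ ^ 2 = 2 * (1 + ⟪x, y⟫) := by
    rw [norm_add_sq_real, hx, hy]; ring
  have hne : 1 + ⟪x, y⟫ ≠ 0 := fun h => hxy (by linarith)
  rw [planeRotation, LinearIsometryEquiv.trans_apply,
    reflection_mem_subspace_eq_self (mem_orthogonal_singleton_iff_inner_right.mpr hv),
    reflection_orthogonal_apply, reflection_singleton_apply, RCLike.ofReal_real_eq_id, id, hnorm,
    inner_add_left, hv, add_zero, neg_sub, ← Nat.cast_smul_eq_nsmul ℝ, smul_smul]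
  congr 2
  field_simp
  ring

theorem det_planeRotation [FiniteDimensional ℝ E] (hy : y ≠ 0) (hxy : x + y ≠ 0) :
    LinearMap.det ((planeRotation x y).toLinearEquiv : E →ₗ[ℝ] E) = 1 := by
  have hdet : ∀ a : E, a ≠ 0 → LinearMap.det (reflection (ℝ ∙ a)ᗮ).toLinearMap = -1 := by
    intro a ha
    rw [det_reflection, orthogonal_orthogonal, finrank_span_singleton ha, pow_one]
  change LinearMap.det ((reflection (ℝ ∙ (x + y))ᗮ).toLinearMap ∘ₗ
    (reflection (ℝ ∙ y)ᗮ).toLinearMap) = 1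
  rw [LinearMap.det_comp, hdet _ hxy, hdet _ hy]
  ring

end planeRotation

theorem sub_inner_smul_mem_inf_orthogonal {x y z : E} (hy : ‖y‖ = 1)
    (hz : z ∈ (ℝ ∙ (x - ⟪y, x⟫ • y))ᗮ) : z - ⟪y, z⟫ • y ∈ (ℝ ∙ x)ᗮ ⊓ (ℝ ∙ y)ᗮ := by
  rw [mem_orthogonal_singleton_iff_inner_right, inner_sub_left, real_inner_smul_left] at hz
  rw [mem_inf, mem_orthogonal_singleton_iff_inner_right, mem_orthogonal_singleton_iff_inner_right,
    inner_sub_right, inner_sub_right, real_inner_smul_right, real_inner_smul_right,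
    real_inner_self_eq_norm_sq, hy, real_inner_comm y x]
  constructor
  · linear_combination hz
  · ring

theorem LinearIsometryEquiv.eq_of_det_eq_of_eqOn_inf_orthogonal [FiniteDimensional ℝ E]
    {x y : E} (hy : ‖y‖ = 1) {g₁ g₂ : E ≃ₗᵢ[ℝ] E}
    (hdet : LinearMap.det (g₁.toLinearEquiv : E →ₗ[ℝ] E) =
      LinearMap.det (g₂.toLinearEquiv : E →ₗ[ℝ] E))
    (hgy : g₁ y = g₂ y) (hgL : Set.EqOn g₁ g₂ ((ℝ ∙ x)ᗮ ⊓ (ℝ ∙ y)ᗮ : Submodule ℝ E)) :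
    g₁ = g₂ := by
  set h := g₁.trans g₂.symm
  have hdet_h : LinearMap.det (h.toLinearEquiv : E →ₗ[ℝ] E) = 1 := by
    change LinearMap.det ((g₂.symm.toLinearEquiv : E →ₗ[ℝ] E) ∘ₗ g₁.toLinearEquiv) = 1
    rw [LinearMap.det_comp, hdet, ← LinearMap.det_comp]
    convert LinearMap.det_id
    ext v
    exact g₂.symm_apply_apply v
  have hfix : ∀ z ∈ (ℝ ∙ (x - ⟪y, x⟫ • y))ᗮ, h z = z := by
    intro z hz
    have hzL := sub_inner_smul_mem_inf_orthogonal hy hz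
    rw [← sub_add_cancel z (⟪y, z⟫ • y)]
    simp only [h, trans_apply, map_add, _root_.map_smul, hgy, hgL hzL, symm_apply_apply]
  have := h.eq_refl_of_det_eq_one_of_forall_mem_orthogonal_singleton _ hdet_h hfix
  ext v
  exact g₂.symm_apply_eq.mp (DFunLike.congr_fun this v)

theorem norm_sub_inner_smul_sq {x y : E} (hx : ‖x‖ = 1) (hy : ‖y‖ = 1) :
    ‖y - ⟪x, y⟫ • x‖ ^ 2 = 1 - ⟪x, y⟫ ^ 2 := by
  rw [norm_sub_sq_real, norm_smul, real_inner_smul_right, hx, hy, Real.norm_eq_abs, mul_pow,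
    sq_abs, real_inner_comm x y]
  ring

theorem starProjection_inf_orthogonal_apply [FiniteDimensional ℝ E] {x y v : E}
    (hx : ‖x‖ = 1) (hy : ‖y‖ = 1) (hxy : ⟪x, y⟫ ^ 2 ≠ 1) (hv : ⟪y, v⟫ = 0) :
    ((ℝ ∙ x)ᗮ ⊓ (ℝ ∙ y)ᗮ).starProjection v =
      v - (⟪x, v⟫ / (1 - ⟪x, y⟫ ^ 2)) • (x - ⟪x, y⟫ • y) := by
  have hne : 1 - ⟪x, y⟫ ^ 2 ≠ 0 := sub_ne_zero.mpr (Ne.symm hxy)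
  have hxx : ⟪x, x⟫ = 1 := by rw [real_inner_self_eq_norm_sq, hx, one_pow]
  have hyy : ⟪y, y⟫ = 1 := by rw [real_inner_self_eq_norm_sq, hy, one_pow]
  refine eq_starProjection_of_mem_of_inner_eq_zero ?_ fun w hw => ?_
  · rw [mem_inf, mem_orthogonal_singleton_iff_inner_right, mem_orthogonal_singleton_iff_inner_right]
    simp only [inner_sub_right, real_inner_smul_right, hxx, hyy, hv, real_inner_comm x y]
    constructor
    · field_simp
      ring
    · ring
  · rw [mem_inf, mem_orthogonal_singleton_iff_inner_right,
      mem_orthogonal_singleton_iff_inner_right] at hw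
    simp only [sub_sub_cancel, real_inner_smul_left, inner_sub_left, hw.1, hw.2]
    ring

end

theorem projPerp_apply (x : S2) (v : V) : projPerp x v = v - ⟪(x : V), v⟫ • (x : V) := by
  change (ℝ ∙ (x : V))ᗮ.starProjection v = _
  rw [starProjection_orthogonal_val,
    starProjection_unit_singleton ℝ (norm_eq_of_mem_sphere x)]

theorem Oker_apply_of_mem_plane {x y : S2} {v : V} (hv : v ∈ plane y) :
    Oker x y v = (⟪(x : V), v⟫ / (1 - ⟪(x : V), y⟫ ^ 2)) • ((y : V) - ⟪(x : V), y⟫ • (x : V)) := by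
  have hx := norm_eq_of_mem_sphere x
  have hy := norm_eq_of_mem_sphere y
  have hv' : ⟪(y : V), v⟫ = 0 := mem_orthogonal_singleton_iff_inner_right.mp hv
  have hnorm : ‖(x : V) - ⟪(y : V), x⟫ • (y : V)‖ = ‖(y : V) - ⟪(x : V), y⟫ • (x : V)‖ := by
    rw [← sq_eq_sq₀ (norm_nonneg _) (norm_nonneg _), norm_sub_inner_smul_sq hy hx,
      norm_sub_inner_smul_sq hx hy, real_inner_comm]
  change ⟪oVec y x, v⟫ • oVec x y = _
  rw [oVec, oVec, projPerp_apply, projPerp_apply, real_inner_smul_left, inner_sub_left,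
    real_inner_smul_left, hv', mul_zero, sub_zero, smul_smul, hnorm, ← norm_sub_inner_smul_sq hx hy]
  congr 1
  field_simp

theorem Cker_sub_Oker_apply_of_mem_plane {x y : S2} (hxy : ⟪(x : V), y⟫ ≠ 1)
    (hxy' : ⟪(x : V), y⟫ ≠ -1) {v : V} (hv : v ∈ plane y) :
    (Cker x y - Oker x y) v = planeRotation (x : V) y v := by
  have hx := norm_eq_of_mem_sphere x
  have hy := norm_eq_of_mem_sphere y
  have hv' : ⟪(y : V), v⟫ = 0 := mem_orthogonal_singleton_iff_inner_right.mp hv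
  have hc : ⟪(x : V), y⟫ ^ 2 ≠ 1 := sq_ne_one_iff.mpr ⟨hxy, hxy'⟩
  have hC : Cker x y v = ((ℝ ∙ (x : V))ᗮ ⊓ (ℝ ∙ (y : V))ᗮ).starProjection v := rfl
  rw [LinearMap.sub_apply, hC, starProjection_inf_orthogonal_apply hx hy hc hv',
    Oker_apply_of_mem_plane hv, planeRotation_apply_of_inner_eq_zero hx hy hxy' hv']
  have hk : ⟪(x : V), v⟫ / (1 - ⟪(x : V), y⟫ ^ 2) * (1 - ⟪(x : V), y⟫) =
      ⟪(x : V), v⟫ / (1 + ⟪(x : V), y⟫) := by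
    have hc₁ : 1 - ⟪(x : V), y⟫ ≠ 0 := sub_ne_zero.mpr (Ne.symm hxy)
    have hc₂ : 1 + ⟪(x : V), y⟫ ≠ 0 := fun h => hxy' (by linarith)
    field_simp
    ring
  linear_combination (norm := module) -(hk • ((x : V) + y))

/-- For `x ≠ ±y` the operator `T(x,y) = C(x,y) - O(x,y) : y^⊥ → x^⊥` is the
restriction to `y^⊥` of the unique rotation `g ∈ SO(3)` mapping `y` to `x` and fixing the
common line `x^⊥ ∩ y^⊥` pointwise (parallel translation along the unique geodesic of `S²`
from `y` to `x`).  In particular `T(x,y)` is an orthogonal isomorphism of `y^⊥` onto `x^⊥`. -/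
theorem parallel_translation_kernel (x y : S2)
    (hxy : (x : V) ≠ (y : V)) (hxy' : (x : V) ≠ -(y : V)) :
    -- there is a unique rotation mapping `y` to `x` and fixing the common line pointwise
    (∃! g : V ≃ₗᵢ[ℝ] V,
      LinearMap.det (g.toLinearEquiv : V →ₗ[ℝ] V) = 1 ∧ g (y : V) = (x : V) ∧
        ∀ u ∈ cline x y, g u = u) ∧
    -- `T(x,y)` is the restriction of this rotation to `y^⊥`
    (∀ g : V ≃ₗᵢ[ℝ] V,
      LinearMap.det (g.toLinearEquiv : V →ₗ[ℝ] V) = 1 → g (y : V) = (x : V) →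
      (∀ u ∈ cline x y, g u = u) →
      ∀ v ∈ plane y, (Cker x y - Oker x y) v = g v) ∧
    -- in particular `T(x,y)` maps `y^⊥` isometrically onto `x^⊥`
    (∀ v ∈ plane y, (Cker x y - Oker x y) v ∈ plane x ∧
      ‖(Cker x y - Oker x y) v‖ = ‖v‖) ∧
    (∀ w ∈ plane x, ∃ v ∈ plane y, (Cker x y - Oker x y) v = w) := by
  have hx := norm_eq_of_mem_sphere x
  have hy := norm_eq_of_mem_sphere y
  have hc₁ : ⟪(x : V), y⟫ ≠ 1 := mt (inner_eq_one_iff_of_norm_eq_one hx hy).mp hxy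
  have hc₂ : ⟪(x : V), y⟫ ≠ -1 := mt (inner_eq_neg_one_iff_of_norm_eq_one hx hy).mp hxy'
  set g := planeRotation (x : V) y
  have hdet : LinearMap.det (g.toLinearEquiv : V →ₗ[ℝ] V) = 1 :=
    det_planeRotation (ne_zero_of_mem_unit_sphere y) fun h => hxy' (eq_neg_of_add_eq_zero_left h)
  have hgy : g y = x := planeRotation_apply_right (hx.trans hy.symm)
  have hgL : ∀ u ∈ cline x y, g u = u := fun u hu => planeRotation_apply_of_mem hu
  have huniq : ∀ g' : V ≃ₗᵢ[ℝ] V, LinearMap.det (g'.toLinearEquiv : V →ₗ[ℝ] V) = 1 →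
      g' y = x → (∀ u ∈ cline x y, g' u = u) → g' = g := fun g' hdet' hgy' hgL' =>
    LinearIsometryEquiv.eq_of_det_eq_of_eqOn_inf_orthogonal hy (hdet'.trans hdet.symm)
      (hgy'.trans hgy.symm) fun u hu => (hgL' u hu).trans (hgL u hu).symm
  have hT : ∀ v ∈ plane y, (Cker x y - Oker x y) v = g v := fun v hv =>
    Cker_sub_Oker_apply_of_mem_plane hc₁ hc₂ hv
  refine ⟨⟨g, ⟨hdet, hgy, hgL⟩, fun g' hg' => huniq g' hg'.1 hg'.2.1 hg'.2.2⟩,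
    fun g' hdet' hgy' hgL' v hv => by rw [hT v hv, huniq g' hdet' hgy' hgL'],
    fun v hv => ?_, fun w hw => ?_⟩
  · rw [hT v hv]
    exact ⟨(g.apply_mem_orthogonal_singleton_iff hgy).mpr hv, g.norm_map v⟩
  · have hv : g.symm w ∈ plane y :=
      (g.apply_mem_orthogonal_singleton_iff hgy).mp (by rwa [g.apply_symm_apply])
    exact ⟨g.symm w, hv, by rw [hT _ hv, g.apply_symm_apply]⟩
end
end

section
/- Let (h, e, f) be the standard sl₂-triple (with [h,e] = 2e, [h,f] = −2f, [e,f] = h), let M and W be complex representations of sl₂(ℂ), and let n ≥ 1. Suppose ψ ∈ M satisfies h·ψ = 2(n−1)·ψ and e·ψ = 0, and v ∈ W satisfies h·v = 2v, e·v = 0, and f³·v = 0. Set P = f^{n−1}·ψ ∈ M. Then in the tensor product representation M ⊗ W one has f^{n−1}·(ψ ⊗ v) = P ⊗ v + (1/n)·(e·P) ⊗ (f·v) + (1/(2n(n+1)))·(e²·P) ⊗ (f²·v). -/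
/-!
On `M ⊗ W` the element `f` acts as `f ⊗ 1 + 1 ⊗ f`, a sum of two commuting operators, so
`f^k (ψ ⊗ v)` expands binomially, and `f³ v = 0` leaves only three terms. For `ψ` primitive of
weight `2k` (here `k = n - 1`) one has `e f^k ψ = k(k+1) f^(k-1) ψ` and
`e² f^k ψ = k(k-1)(k+1)(k+2) f^(k-2) ψ`, which turns the binomial coefficients `k` and `k(k-1)/2`
into the coefficients `1/n` and `1/(2n(n+1))` of `e P` and `e² P`.
-/

open TensorProduct LieModule Finset

section TensorPower

variable (R : Type*) {L M N : Type*} [CommRing R] [LieRing L] [LieAlgebra R L]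
  [AddCommGroup M] [Module R M] [LieRingModule L M] [LieModule R L M]
  [AddCommGroup N] [Module R N] [LieRingModule L N] [LieModule R L N]

lemma LieModule.iterate_lie_eq_toEnd_pow (x : L) (k : ℕ) :
    (fun m : M => ⁅x, m⁆)^[k] = ⇑(toEnd R L M x ^ k) := by
  rw [Module.End.coe_pow]
  rfl

variable {R}

lemma LieModule.toEnd_tensorProduct (x : L) :
    toEnd R L (M ⊗[R] N) x = (toEnd R L M x).rTensor N + (toEnd R L N x).lTensor M := by
  ext m n
  simp

lemma LieModule.toEnd_pow_tmul (x : L) (k : ℕ) (m : M) (n : N) :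
    (toEnd R L (M ⊗[R] N) x ^ k) (m ⊗ₜ n) = ∑ i ∈ range (k + 1),
      k.choose i • ((toEnd R L M x ^ (k - i)) m ⊗ₜ (toEnd R L N x ^ i) n) := by
  have hcomm : Commute ((toEnd R L N x).lTensor M) ((toEnd R L M x).rTensor N) :=
    (LinearMap.lTensor_comp_rTensor _ _ _).trans (LinearMap.rTensor_comp_lTensor _ _ _).symm
  rw [toEnd_tensorProduct, add_comm, hcomm.add_pow]
  simp [LinearMap.lTensor_pow, LinearMap.rTensor_pow]

lemma LieModule.toEnd_pow_tmul_eq_sum_range_of_apply_eq_zero {x : L} {r : ℕ} {n : N}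
    (hn : (toEnd R L N x ^ r) n = 0) (k : ℕ) (m : M) :
    (toEnd R L (M ⊗[R] N) x ^ k) (m ⊗ₜ n) = ∑ i ∈ range r,
      k.choose i • ((toEnd R L M x ^ (k - i)) m ⊗ₜ (toEnd R L N x ^ i) n) := by
  rw [toEnd_pow_tmul]
  calc _ = ∑ i ∈ range (k + 1 + r),
        k.choose i • ((toEnd R L M x ^ (k - i)) m ⊗ₜ (toEnd R L N x ^ i) n) := by
        refine sum_subset (range_subset_range.mpr (by omega)) fun i _ hi => ?_
        rw [Nat.choose_eq_zero_of_lt (by simpa using hi), zero_smul]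
    _ = _ := by
        refine (sum_subset (range_subset_range.mpr (by omega)) fun i _ hi => ?_).symm
        obtain ⟨j, rfl⟩ : ∃ j, i = j + r := ⟨i - r, by simp at hi; omega⟩
        rw [pow_add, Module.End.mul_apply, hn, map_zero, tmul_zero, smul_zero]

end TensorPower

namespace IsSl2Triple.HasPrimitiveVectorWith

variable {R L M : Type*} [CommRing R] [LieRing L] [LieAlgebra R L]
  [AddCommGroup M] [Module R M] [LieRingModule L M] [LieModule R L M]
  {h e f : L} {t : IsSl2Triple h e f} {m : M} {μ : R}

lemma lie_e_pow_toEnd_f (P : t.HasPrimitiveVectorWith m μ) (k : ℕ) :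
    ⁅e, (toEnd R L M f ^ k) m⁆ = (k * (μ - k + 1)) • (toEnd R L M f ^ (k - 1)) m := by
  cases k with
  | zero => simp [P.lie_e]
  | succ k =>
    rw [P.lie_e_pow_succ_toEnd_f, Nat.add_sub_cancel]
    congr 1
    push_cast
    ring

lemma lie_e_lie_e_pow_toEnd_f (P : t.HasPrimitiveVectorWith m μ) (k : ℕ) :
    ⁅e, ⁅e, (toEnd R L M f ^ k) m⁆⁆ =
      (k * (k - 1) * (μ - k + 1) * (μ - k + 2)) • (toEnd R L M f ^ (k - 2)) m := by
  rw [P.lie_e_pow_toEnd_f, lie_smul, P.lie_e_pow_toEnd_f, smul_smul, Nat.sub_sub]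
  cases k with
  | zero => simp
  | succ k =>
    congr 1
    push_cast
    ring

end IsSl2Triple.HasPrimitiveVectorWith

theorem sl2_lowering_of_tensor_highest_weight_general
    {L : Type*} [LieRing L] [LieAlgebra ℂ L]
    {M : Type*} [AddCommGroup M] [Module ℂ M] [LieRingModule L M] [LieModule ℂ L M]
    {W : Type*} [AddCommGroup W] [Module ℂ W] [LieRingModule L W] [LieModule ℂ L W]
    (h e f : L) (ht : IsSl2Triple h e f)
    (n : ℕ)
    (ψ : M) (hψh : ⁅h, ψ⁆ = ((2 : ℂ) * ((n : ℂ) - 1)) • ψ) (hψe : ⁅e, ψ⁆ = 0)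
    (v : W)
    (hvf : ⁅f, ⁅f, ⁅f, v⁆⁆⁆ = 0) :
    (fun z : M ⊗[ℂ] W => ⁅f, z⁆)^[n - 1] (ψ ⊗ₜ v)
      = ((fun m : M => ⁅f, m⁆)^[n - 1] ψ) ⊗ₜ v
        + (1 / (n : ℂ)) • (⁅e, (fun m : M => ⁅f, m⁆)^[n - 1] ψ⁆ ⊗ₜ ⁅f, v⁆)
        + (1 / (2 * (n : ℂ) * ((n : ℂ) + 1))) •
            (⁅e, ⁅e, (fun m : M => ⁅f, m⁆)^[n - 1] ψ⁆⁆ ⊗ₜ ⁅f, ⁅f, v⁆⁆) := by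
  rcases n with _ | k
  · simp -- `1 / 0 = 0` in `ℂ`
  simp only [iterate_lie_eq_toEnd_pow ℂ, Nat.add_sub_cancel]
  obtain rfl | hψ := eq_or_ne ψ 0
  · simp
  have P : ht.HasPrimitiveVectorWith ψ (2 * k : ℂ) := ⟨hψ, by simpa using hψh, hψe⟩
  have hv : (toEnd ℂ L W f ^ 3) v = 0 := by simpa [pow_succ] using hvf
  rw [toEnd_pow_tmul_eq_sum_range_of_apply_eq_zero hv, P.lie_e_lie_e_pow_toEnd_f,
    P.lie_e_pow_toEnd_f]
  simp only [sum_range_succ, range_zero, sum_empty, zero_add, Nat.choose_zero_right,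
    Nat.choose_one_right, Nat.sub_zero, pow_zero, pow_one, pow_two,
    Module.End.one_apply, Module.End.mul_apply, toEnd_apply_apply, ← smul_tmul',
    ← Nat.cast_smul_eq_nsmul ℂ, smul_smul, Nat.cast_choose_two]
  have hk₁ : (k : ℂ) + 1 ≠ 0 := by exact_mod_cast k.succ_ne_zero
  have hk₂ : (k : ℂ) + 1 + 1 ≠ 0 := by exact_mod_cast (k + 1).succ_ne_zero
  match_scalars
  · ring
  · field_simp
    ring
  · field_simp
    ring

/-- Let `(h,e,f)` be an `sl₂`-triple acting on complex representations
`M` and `W`, let `n ≥ 1`, let `ψ ∈ M` be a highest weight vector of weight `2(n-1)`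
(`h·ψ = 2(n-1)ψ`, `e·ψ = 0`) and let `v ∈ W` satisfy `h·v = 2v`, `e·v = 0`, `f³·v = 0`.
Set `P = f^(n-1)·ψ`.  Then in `M ⊗ W` (with the Leibniz action of `f`):
`f^(n-1)(ψ ⊗ v) = P ⊗ v + (1/n)(eP) ⊗ (fv) + (1/(2n(n+1)))(e²P) ⊗ (f²v)`. -/
theorem sl2_lowering_of_tensor_highest_weight
    {L : Type*} [LieRing L] [LieAlgebra ℂ L]
    {M : Type*} [AddCommGroup M] [Module ℂ M] [LieRingModule L M] [LieModule ℂ L M]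
    {W : Type*} [AddCommGroup W] [Module ℂ W] [LieRingModule L W] [LieModule ℂ L W]
    (h e f : L) (ht : IsSl2Triple h e f)
    (n : ℕ) (hn : 1 ≤ n)
    (ψ : M) (hψh : ⁅h, ψ⁆ = ((2 : ℂ) * ((n : ℂ) - 1)) • ψ) (hψe : ⁅e, ψ⁆ = 0)
    (v : W) (hvh : ⁅h, v⁆ = (2 : ℂ) • v) (hve : ⁅e, v⁆ = 0)
    (hvf : ⁅f, ⁅f, ⁅f, v⁆⁆⁆ = 0) :
    (fun z : M ⊗[ℂ] W => ⁅f, z⁆)^[n - 1] (ψ ⊗ₜ v)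
      = ((fun m : M => ⁅f, m⁆)^[n - 1] ψ) ⊗ₜ v
        + (1 / (n : ℂ)) • (⁅e, (fun m : M => ⁅f, m⁆)^[n - 1] ψ⁆ ⊗ₜ ⁅f, v⁆)
        + (1 / (2 * (n : ℂ) * ((n : ℂ) + 1))) •
            (⁅e, ⁅e, (fun m : M => ⁅f, m⁆)^[n - 1] ψ⁆⁆ ⊗ₜ ⁅f, ⁅f, v⁆⁆) :=
  sl2_lowering_of_tensor_highest_weight_general h e f ht n ψ hψh hψe v hvf
end

section
/- For every real t with |t| < 1, the following three definite integral identities hold: (1) ∫₀^π sin(θ)(1+cos(θ))(1−2t·cos(θ)+t²)^{−1/2} dθ = 2 + (2/3)t; (2) ∫₀^π sin³(θ)(1−2t·cos(θ)+t²)^{−3/2} dθ = 4/3; (3) ∫₀^π sin³(θ)(1−cos(θ))(1−2t·cos(θ)+t²)^{−5/2} dθ = 4/(3(1+t)). -/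
/-!
Substituting `u = cos θ` and then `s = √(1 - 2tu + t²)`, i.e. `u = (1 + t² - s²) / (2t)` and
`du = -(s / t) ds`, turns each integrand into a Laurent polynomial in `s` on `[1 - t, 1 + t]`,
which is integrated termwise. At `t = 0` the integrands are already polynomials in `u`.
-/

open Real Set intervalIntegral

lemma one_sub_two_mul_add_sq_pos {t u : ℝ} (ht : |t| < 1) (hu : |u| ≤ 1) :
    0 < 1 - 2 * t * u + t ^ 2 := by
  have h : t * u ≤ |t| :=
    calc t * u ≤ |t| * |u| := (le_abs_self _).trans (abs_mul t u).le
      _ ≤ |t| := mul_le_of_le_one_right (abs_nonneg t) hu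
  nlinarith [sq_abs t]

lemma continuousOn_mul_one_sub_two_mul_add_sq_rpow {t : ℝ} (ht : |t| < 1) {f : ℝ → ℝ}
    (hf : Continuous f) (x : ℝ) :
    ContinuousOn (fun u => f u * (1 - 2 * t * u + t ^ 2) ^ x) (Icc (-1) 1) :=
  hf.continuousOn.mul <| ContinuousOn.rpow_const (by fun_prop) fun _ hu =>
    Or.inl (one_sub_two_mul_add_sq_pos ht (abs_le.mpr hu)).ne'

theorem integral_sin_mul_comp_cos {g : ℝ → ℝ} (hg : ContinuousOn g (Icc (-1) 1)) :
    ∫ θ in 0..π, sin θ * g (cos θ) = ∫ u in (-1)..1, g u := by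
  have h := integral_comp_mul_deriv' (a := 0) (b := π) (f := cos) (f' := fun θ => -sin θ) (g := g)
    (fun θ _ => hasDerivAt_cos θ) (by fun_prop)
    (hg.mono (by rintro _ ⟨θ, -, rfl⟩; exact ⟨neg_one_le_cos θ, cos_le_one θ⟩))
  simp only [Function.comp_def, mul_neg, integral_neg, cos_zero, cos_pi] at h
  rw [integral_symm 1 (-1), ← h, neg_neg]
  simp only [mul_comm]

theorem integral_neg_one_one_eq_integral_sqrt_subst {g : ℝ → ℝ} {t : ℝ} (ht0 : t ≠ 0)
    (ht : |t| ≤ 1) (hg : ContinuousOn g (Icc (-1) 1)) :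
    ∫ u in (-1)..1, g u = ∫ s in (1 - t)..(1 + t), g ((1 + t ^ 2 - s ^ 2) / (2 * t)) * (s / t) := by
  obtain ⟨hm, hp⟩ := abs_le.mp ht
  set φ : ℝ → ℝ := fun s => (1 + t ^ 2 - s ^ 2) / (2 * t) with hφ
  have hmaps : MapsTo φ (uIcc (1 - t) (1 + t)) (Icc (-1) 1) := by
    intro s hs
    rcases ht0.lt_or_gt with h | h
    · rw [uIcc_of_ge (by linarith)] at hs
      rw [mem_Icc, le_div_iff_of_neg (by linarith), div_le_iff_of_neg (by linarith)]
      constructor <;> nlinarith [hs.1, hs.2]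
    · rw [uIcc_of_le (by linarith)] at hs
      rw [mem_Icc, le_div_iff₀ (by linarith), div_le_iff₀ (by linarith)]
      constructor <;> nlinarith [hs.1, hs.2]
  have hderiv (s : ℝ) : HasDerivAt φ (-(s / t)) s :=
    (((hasDerivAt_pow 2 s).const_sub (1 + t ^ 2)).div_const (2 * t)).congr_deriv
      (by field_simp; ring)
  have hφ_left : φ (1 - t) = 1 := by rw [hφ]; field_simp; ring
  have hφ_right : φ (1 + t) = -1 := by rw [hφ]; field_simp; ring
  have h := integral_comp_mul_deriv' (fun s _ => hderiv s) (by fun_prop)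
    (hg.mono hmaps.image_subset)
  rw [hφ_left, hφ_right] at h
  rw [integral_symm, ← h]
  simp [φ, integral_neg]

theorem integral_add_mul_sq_add_div_sq_add_div_pow_four {a b : ℝ} (h0 : (0 : ℝ) ∉ uIcc a b)
    (p q r w : ℝ) :
    ∫ s in a..b, (p + q * s ^ 2 + r / s ^ 2 + w / s ^ 4) =
      p * (b - a) + q / 3 * (b ^ 3 - a ^ 3) - r * (b⁻¹ - a⁻¹) - w / 3 * ((b ^ 3)⁻¹ - (a ^ 3)⁻¹) := by
  have hne : ∀ s ∈ uIcc a b, s ≠ 0 := fun s hs h => h0 (h ▸ hs)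
  have hderiv : ∀ s ∈ uIcc a b,
      HasDerivAt (fun s => p * s + q / 3 * s ^ 3 - r * s⁻¹ - w / 3 * (s ^ 3)⁻¹)
        (p + q * s ^ 2 + r / s ^ 2 + w / s ^ 4) s := by
    intro s hs
    have hs0 := hne s hs
    refine ((((hasDerivAt_id s).const_mul p).add ((hasDerivAt_pow 3 s).const_mul (q / 3))).sub
      ((hasDerivAt_inv hs0).const_mul r)).sub
      (((hasDerivAt_pow 3 s).inv (pow_ne_zero 3 hs0)).const_mul (w / 3)) |>.congr_deriv ?_
    field_simp
    ring
  rw [integral_eq_sub_of_hasDerivAt hderiv]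
  · ring
  · exact ContinuousOn.intervalIntegrable
      (by fun_prop (disch := intro s hs; exact pow_ne_zero _ (hne s hs)))

theorem integral_neg_one_one_eq_of_sqrt_subst_eq_laurent {g : ℝ → ℝ} {t p q r w : ℝ}
    (ht0 : t ≠ 0) (ht : |t| < 1) (hg : ContinuousOn g (Icc (-1) 1))
    (hg_subst : ∀ s, 0 < s →
      g ((1 + t ^ 2 - s ^ 2) / (2 * t)) * (s / t) = p + q * s ^ 2 + r / s ^ 2 + w / s ^ 4) :
    ∫ u in (-1)..1, g u = p * ((1 + t) - (1 - t)) + q / 3 * ((1 + t) ^ 3 - (1 - t) ^ 3)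
      - r * ((1 + t)⁻¹ - (1 - t)⁻¹) - w / 3 * (((1 + t) ^ 3)⁻¹ - ((1 - t) ^ 3)⁻¹) := by
  obtain ⟨hm, hp⟩ := abs_lt.mp ht
  have hpos : ∀ s ∈ uIcc (1 - t) (1 + t), 0 < s := fun s hs => by
    rcases mem_uIcc.mp hs with h | h <;> linarith [h.1]
  rw [integral_neg_one_one_eq_integral_sqrt_subst ht0 ht.le hg,
    integral_congr fun s hs => hg_subst s (hpos s hs),
    integral_add_mul_sq_add_div_sq_add_div_pow_four fun h => (hpos 0 h).false]

lemma one_sub_two_mul_add_sq_rpow_neg_half_of_sqrt_subst {t s : ℝ} (ht : t ≠ 0) (hs : 0 ≤ s)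
    (x : ℝ) : (1 - 2 * t * ((1 + t ^ 2 - s ^ 2) / (2 * t)) + t ^ 2) ^ (-(x / 2)) = (s ^ x)⁻¹ := by
  have h : 1 - 2 * t * ((1 + t ^ 2 - s ^ 2) / (2 * t)) + t ^ 2 = s ^ 2 := by field_simp; ring
  rw [h, ← rpow_natCast_mul hs, ← rpow_neg hs]
  push_cast
  ring_nf

theorem integral_one_add_mul_rpow_neg_one_half {t : ℝ} (ht : |t| < 1) :
    ∫ u in (-1)..1, (1 + u) * (1 - 2 * t * u + t ^ 2) ^ (-(1 / 2) : ℝ) = 2 + 2 / 3 * t := by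
  obtain rfl | ht0 := eq_or_ne t 0
  · norm_num [integral_add intervalIntegrable_const intervalIntegrable_id]
  rw [integral_neg_one_one_eq_of_sqrt_subst_eq_laurent ht0 ht
    (continuousOn_mul_one_sub_two_mul_add_sq_rpow ht (by fun_prop) _)
    (p := (1 + t) ^ 2 / (2 * t ^ 2)) (q := -1 / (2 * t ^ 2)) (r := 0) (w := 0)]
  · field_simp
    ring
  · intro s hs
    rw [one_sub_two_mul_add_sq_rpow_neg_half_of_sqrt_subst ht0 hs.le, rpow_one]
    field_simp
    ring

theorem integral_one_sub_sq_mul_rpow_neg_three_half {t : ℝ} (ht : |t| < 1) :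
    ∫ u in (-1)..1, (1 - u ^ 2) * (1 - 2 * t * u + t ^ 2) ^ (-(3 / 2) : ℝ) = 4 / 3 := by
  obtain rfl | ht0 := eq_or_ne t 0
  · norm_num [integral_sub intervalIntegrable_const (intervalIntegrable_pow 2), integral_pow]
  obtain ⟨hm, hp⟩ := abs_lt.mp ht
  -- the substituted integrand is `(s² - (1 - t)²) ((1 + t)² - s²) / (4t³s²)`
  rw [integral_neg_one_one_eq_of_sqrt_subst_eq_laurent ht0 ht
    (continuousOn_mul_one_sub_two_mul_add_sq_rpow ht (by fun_prop) _)
    (p := (1 + t ^ 2) / (2 * t ^ 3)) (q := -1 / (4 * t ^ 3)) (r := -(1 - t ^ 2) ^ 2 / (4 * t ^ 3))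
    (w := 0)]
  · have h₁ : 1 - t ≠ 0 := by linarith
    have h₂ : 1 + t ≠ 0 := by linarith
    field_simp
    ring
  · intro s hs
    rw [one_sub_two_mul_add_sq_rpow_neg_half_of_sqrt_subst ht0 hs.le, rpow_ofNat]
    field_simp
    ring

theorem integral_one_sub_sq_mul_one_sub_mul_rpow_neg_five_half {t : ℝ} (ht : |t| < 1) :
    ∫ u in (-1)..1, (1 - u ^ 2) * (1 - u) * (1 - 2 * t * u + t ^ 2) ^ (-(5 / 2) : ℝ)
      = 4 / (3 * (1 + t)) := by
  obtain rfl | ht0 := eq_or_ne t 0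
  · have h : ∀ u : ℝ, (1 - u ^ 2) * (1 - u) = (1 - u ^ 2) - (u - u ^ 3) := fun u => by ring
    norm_num [h, integral_pow, integral_id,
      integral_sub (intervalIntegrable_const.sub (intervalIntegrable_pow 2))
        (intervalIntegrable_id.sub (intervalIntegrable_pow 3)),
      integral_sub intervalIntegrable_const (intervalIntegrable_pow 2),
      integral_sub intervalIntegrable_id (intervalIntegrable_pow 3)]
  obtain ⟨hm, hp⟩ := abs_lt.mp ht
  -- the substituted integrand is `(s² - (1 - t)²)² ((1 + t)² - s²) / (8t⁴s⁴)`
  rw [integral_neg_one_one_eq_of_sqrt_subst_eq_laurent ht0 ht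
    (continuousOn_mul_one_sub_two_mul_add_sq_rpow ht (by fun_prop) _)
    (p := ((1 + t) ^ 2 + 2 * (1 - t) ^ 2) / (8 * t ^ 4)) (q := -1 / (8 * t ^ 4))
    (r := -(2 * (1 - t) ^ 2 * (1 + t) ^ 2 + (1 - t) ^ 4) / (8 * t ^ 4))
    (w := (1 - t) ^ 4 * (1 + t) ^ 2 / (8 * t ^ 4))]
  · have h₁ : 1 - t ≠ 0 := by linarith
    have h₂ : 1 + t ≠ 0 := by linarith
    field_simp
    ring
  · intro s hs
    rw [one_sub_two_mul_add_sq_rpow_neg_half_of_sqrt_subst ht0 hs.le, rpow_ofNat]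
    field_simp
    ring

/-- Three definite integral identities, valid for every real `t` with
`|t| < 1`:
(1) `∫₀^π sin θ (1+cos θ)(1-2t·cos θ+t²)^(-1/2) dθ = 2 + (2/3)t`;
(2) `∫₀^π sin³ θ (1-2t·cos θ+t²)^(-3/2) dθ = 4/3`;
(3) `∫₀^π sin³ θ (1-cos θ)(1-2t·cos θ+t²)^(-5/2) dθ = 4/(3(1+t))`. -/
theorem generating_function_integrals (t : ℝ) (ht : |t| < 1) :
    (∫ θ in (0 : ℝ)..π,
        sin θ * (1 + cos θ) * (1 - 2 * t * cos θ + t ^ 2) ^ (-(1 / 2) : ℝ))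
      = 2 + (2 / 3) * t ∧
    (∫ θ in (0 : ℝ)..π,
        sin θ ^ 3 * (1 - 2 * t * cos θ + t ^ 2) ^ (-(3 / 2) : ℝ)) = 4 / 3 ∧
    (∫ θ in (0 : ℝ)..π,
        sin θ ^ 3 * (1 - cos θ) * (1 - 2 * t * cos θ + t ^ 2) ^ (-(5 / 2) : ℝ))
      = 4 / (3 * (1 + t)) := by
  have hsin (θ : ℝ) : sin θ ^ 3 = sin θ * (1 - cos θ ^ 2) := by rw [← sin_sq]; ring
  refine ⟨?_, ?_, ?_⟩
  · rw [← integral_one_add_mul_rpow_neg_one_half ht, ← integral_sin_mul_comp_cos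
      (continuousOn_mul_one_sub_two_mul_add_sq_rpow ht (f := fun u => 1 + u) (by fun_prop) _)]
    simp only [mul_assoc]
  · rw [← integral_one_sub_sq_mul_rpow_neg_three_half ht, ← integral_sin_mul_comp_cos
      (continuousOn_mul_one_sub_two_mul_add_sq_rpow ht (f := fun u => 1 - u ^ 2) (by fun_prop) _)]
    simp only [hsin, mul_assoc]
  · rw [← integral_one_sub_sq_mul_one_sub_mul_rpow_neg_five_half ht, ← integral_sin_mul_comp_cos
      (continuousOn_mul_one_sub_two_mul_add_sq_rpow ht (f := fun u => (1 - u ^ 2) * (1 - u))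
        (by fun_prop) _)]
    simp only [hsin, mul_assoc]
end
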